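/- Assume L = 1 and write f_λ = η_λ − θ. Then there exist C > 0 and Λ > 0 such that for all λ ≥ Λ, sup_{t∈[0,1]} |⟨θ(t), f_λ(t)⟩| ≤ C/λ²; i.e., the projection of f_λ(t) onto the direction θ(t) is of order O(1/λ²), one order smaller than |f_λ(t)| itself. -/

import Mathlib

open Real Set Filter
open scoped Topology RealInnerProductSpace

/-!
Let `F = 1 - ⟪θ, η⟫ = |⟪θ, η - θ⟫|`, which vanishes at `0`. Along the development,
`F' = -λ coth ρ (1 - ⟪θ, η⟫²) - ⟪θ', η⟫`. Since `θ' ⊥ θ`, the drift term is at most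
`‖θ'‖ ‖η - θ‖ ≤ M √(2F)` with `M ≥ sup ‖θ'‖`, while `coth ρ ≥ 1` makes the pull term
at most `-λ F (2 - F)`. At the level `F = 8M²/λ²` the pull (`12M²/λ`) beats the drift
(`4M²/λ`), so `F` never crosses that level.
-/

theorem image_le_of_deriv_right_neg_of_eq {f : ℝ → ℝ} {a b B : ℝ}
    (hf : ContinuousOn f (Icc a b)) (ha : f a < B)
    (hcross : ∀ x ∈ Ioo a b, f x = B → ∃ f' < 0, HasDerivWithinAt f f' (Ici x) x) :
    ∀ x ∈ Icc a b, f x ≤ B := by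
  have hclosed : IsClosed ({x | f x ≤ B} ∩ Icc a b) := by
    rw [inter_comm]
    exact hf.preimage_isClosed_of_isClosed isClosed_Icc isClosed_Iic
  refine fun x hx ↦ IsClosed.Icc_subset_of_forall_mem_nhdsWithin hclosed ha.le ?_ hx
  rintro x ⟨hxB, hxa, hxb⟩
  rcases (show f x ≤ B from hxB).lt_or_eq with hlt | heq
  · have hle : 𝓝[>] x ≤ 𝓝[Icc a b] x :=
      nhdsWithin_le_of_mem (mem_of_superset (Ioc_mem_nhdsGT hxb) (Ioc_subset_Icc_self.trans
        (Icc_subset_Icc_left hxa)))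
    exact Eventually.mono (hle ((hf x ⟨hxa, hxb.le⟩).eventually (gt_mem_nhds hlt)))
      fun _ h ↦ h.le
  · have hax : a < x := hxa.lt_of_ne fun h ↦ ha.ne (h ▸ heq)
    obtain ⟨f', hf'neg, hf'⟩ := hcross x ⟨hax, hxb⟩ heq
    filter_upwards [hf'.Ioi_of_Ici.limsup_slope_le' (lt_irrefl x) hf'neg,
      self_mem_nhdsWithin] with z hz hxz
    exact heq ▸ ((slope_neg_iff_of_le (le_of_lt hxz)).mp hz).le

theorem one_le_cosh_div_sinh {x : ℝ} (hx : 0 < x) : 1 ≤ cosh x / sinh x :=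
  (one_le_div (sinh_pos_iff.mpr hx)).mpr (sinh_lt_cosh x).le

section InnerProductSpace

variable {E : Type*} [NormedAddCommGroup E] [InnerProductSpace ℝ E]

theorem HasDerivWithinAt.inner_eq_zero_of_forall_norm_eq {γ : ℝ → E} {γ' : E} {s : Set ℝ}
    {t r : ℝ} (hγ : HasDerivWithinAt γ γ' s t) (hs : UniqueDiffWithinAt ℝ s t) (ht : t ∈ s)
    (hnorm : ∀ u ∈ s, ‖γ u‖ = r) : ⟪γ t, γ'⟫ = 0 := by
  have hconst : HasDerivWithinAt (‖γ ·‖ ^ 2) 0 s t :=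
    (hasDerivWithinAt_const t s (r ^ 2)).congr (fun u hu ↦ by rw [hnorm u hu])
      (by rw [hnorm t ht])
  have := hs.eq_deriv s hγ.norm_sq hconst
  linarith

variable {u v : E}

theorem abs_inner_sub_self_eq (hu : ‖u‖ = 1) (hv : ‖v‖ = 1) :
    |⟪u, v - u⟫| = 1 - ⟪u, v⟫ := by
  have hle : ⟪u, v⟫ ≤ 1 := by simpa [hu, hv] using real_inner_le_norm u v
  rw [inner_sub_right, real_inner_self_eq_norm_sq, hu, abs_of_nonpos (by linarith)]
  ring

theorem norm_sub_sq_eq_of_norm_eq_one (hu : ‖u‖ = 1) (hv : ‖v‖ = 1) :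
    ‖v - u‖ ^ 2 = 2 * (1 - ⟪u, v⟫) := by
  rw [norm_sub_sq_real, hu, hv, real_inner_comm]
  ring

theorem inner_sub_inner_smul_eq (hu : ‖u‖ = 1) :
    ⟪u, u - ⟪u, v⟫ • v⟫ = 1 - ⟪u, v⟫ ^ 2 := by
  rw [inner_sub_right, real_inner_smul_right, real_inner_self_eq_norm_sq, hu]
  ring

theorem inner_add_inner_smul_pos_of_one_sub_inner_eq {u' : E} {M lam c : ℝ}
    (hu : ‖u‖ = 1) (hv : ‖v‖ = 1) (hperp : ⟪u, u'⟫ = 0) (hu' : ‖u'‖ ≤ M) (hM : 0 < M)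
    (hlam : 4 * M ≤ lam) (hc : lam ≤ c) (hv_level : 1 - ⟪u, v⟫ = 8 * M ^ 2 / lam ^ 2) :
    0 < ⟪u', v⟫ + ⟪u, c • (u - ⟪u, v⟫ • v)⟫ := by
  set B := 1 - ⟪u, v⟫ with hB
  have hlam0 : 0 < lam := by linarith
  have hBpos : 0 < B := by rw [hv_level]; positivity
  have hBhalf : B ≤ 1 / 2 := by
    rw [hv_level, div_le_iff₀ (by positivity)]
    nlinarith
  have hdist : ‖v - u‖ = 4 * M / lam := by
    rw [← sq_eq_sq₀ (norm_nonneg _) (by positivity), norm_sub_sq_eq_of_norm_eq_one hu hv, ← hB,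
      hv_level]
    ring
  have htangent : |⟪u', v⟫| ≤ 4 * M ^ 2 / lam := calc
    |⟪u', v⟫| = |⟪u', v - u⟫| := by rw [inner_sub_right, real_inner_comm u u', hperp, sub_zero]
    _ ≤ ‖u'‖ * ‖v - u‖ := abs_real_inner_le_norm _ _
    _ ≤ M * (4 * M / lam) := by rw [hdist]; gcongr
    _ = 4 * M ^ 2 / lam := by ring
  have hnormal : 12 * M ^ 2 / lam ≤ ⟪u, c • (u - ⟪u, v⟫ • v)⟫ := calc
    12 * M ^ 2 / lam = lam * (3 / 2 * B) := by rw [hv_level]; field_simp; ring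
    _ ≤ c * (B * (2 - B)) := mul_le_mul hc (by nlinarith) (by positivity) (by linarith)
    _ = ⟪u, c • (u - ⟪u, v⟫ • v)⟫ := by
      rw [real_inner_smul_right, inner_sub_inner_smul_eq hu]; ring
  have hsplit : 12 * M ^ 2 / lam = 4 * M ^ 2 / lam + 8 * M ^ 2 / lam := by ring
  have h8 : 0 < 8 * M ^ 2 / lam := by positivity
  linarith [(abs_le.mp htangent).1]

theorem one_sub_inner_le_of_hasDerivAt_pull {θ θ' η : ℝ → E} {κ : ℝ → ℝ} {M lam : ℝ}
    (hM : 0 < M) (hlam : 4 * M ≤ lam)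
    (hθ1 : ∀ t ∈ Icc (0 : ℝ) 1, ‖θ t‖ = 1) (hθd : ∀ t ∈ Icc (0 : ℝ) 1, HasDerivAt θ (θ' t) t)
    (hθ'M : ∀ t ∈ Icc (0 : ℝ) 1, ‖θ' t‖ ≤ M)
    (hηc : ContinuousOn η (Icc 0 1)) (hη1 : ∀ t ∈ Icc (0 : ℝ) 1, ‖η t‖ = 1) (hη0 : η 0 = θ 0)
    (hκ : ∀ t ∈ Ioc (0 : ℝ) 1, lam ≤ κ t)
    (hηd : ∀ t ∈ Ioc (0 : ℝ) 1, HasDerivAt η (κ t • (θ t - ⟪θ t, η t⟫ • η t)) t) :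
    ∀ t ∈ Icc (0 : ℝ) 1, 1 - ⟪θ t, η t⟫ ≤ 8 * M ^ 2 / lam ^ 2 := by
  have hθc : ContinuousOn θ (Icc 0 1) := fun t ht ↦ (hθd t ht).continuousAt.continuousWithinAt
  refine image_le_of_deriv_right_neg_of_eq (continuousOn_const.sub (hθc.inner hηc)) ?_ ?_
  · rw [hη0, real_inner_self_eq_norm_sq, hθ1 0 (left_mem_Icc.mpr zero_le_one)]
    have : 0 < lam := by linarith
    simpa using (by positivity : (0 : ℝ) < 8 * M ^ 2 / lam ^ 2)
  · intro t ht hlevel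
    have ht' : t ∈ Icc (0 : ℝ) 1 := Ioo_subset_Icc_self ht
    have hperp : ⟪θ t, θ' t⟫ = 0 := (hθd t ht').hasDerivWithinAt.inner_eq_zero_of_forall_norm_eq
      (uniqueDiffOn_Icc zero_lt_one t ht') ht' hθ1
    refine ⟨_, ?_, (((hθd t ht').inner ℝ (hηd t (Ioo_subset_Ioc_self ht))).const_sub
      1).hasDerivWithinAt⟩
    rw [neg_neg_iff_pos, add_comm]
    exact inner_add_inner_smul_pos_of_one_sub_inner_eq (hθ1 t ht') (hη1 t ht') hperp
      (hθ'M t ht') hM hlam (hκ t (Ioo_subset_Ioc_self ht)) hlevel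

end InnerProductSpace

theorem step2_projection_bound_general
    {d : ℕ}
    (θ θ' : ℝ → EuclideanSpace ℝ (Fin d))
    (hθ1 : ∀ t ∈ Icc (0 : ℝ) 1, ‖θ t‖ = 1)
    (hθd : ∀ t ∈ Icc (0 : ℝ) 1, HasDerivAt θ (θ' t) t)
    (hθ'c : ContinuousOn θ' (Icc 0 1))
    (η : ℝ → ℝ → EuclideanSpace ℝ (Fin d)) (ρ : ℝ → ℝ → ℝ)
    (hηc : ∀ lam > (0 : ℝ), ContinuousOn (η lam) (Icc 0 1))
    (hη1 : ∀ lam > (0 : ℝ), ∀ t ∈ Icc (0 : ℝ) 1, ‖η lam t‖ = 1)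
    (hη0 : ∀ lam > (0 : ℝ), η lam 0 = θ 0)
    (hρpos : ∀ lam > (0 : ℝ), ∀ t ∈ Ioc (0 : ℝ) 1, 0 < ρ lam t)
    (hODE : ∀ lam > (0 : ℝ), ∀ t ∈ Ioc (0 : ℝ) 1,
      HasDerivAt (η lam)
        ((lam * (Real.cosh (ρ lam t) / Real.sinh (ρ lam t))) •
          (θ t - (inner ℝ (θ t) (η lam t) : ℝ) • η lam t)) t ∧
      HasDerivAt (ρ lam) (lam * (inner ℝ (θ t) (η lam t) : ℝ)) t) :
    ∃ C > (0 : ℝ), ∃ Λ > (0 : ℝ), ∀ lam ≥ Λ, ∀ t ∈ Icc (0 : ℝ) 1,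
      |(inner ℝ (θ t) (η lam t - θ t) : ℝ)| ≤ C / lam ^ 2 := by
  obtain ⟨K, hK⟩ := isCompact_Icc.exists_bound_of_continuousOn hθ'c
  set M := max K 1
  have hM : 0 < M := lt_max_of_lt_right one_pos
  refine ⟨8 * M ^ 2, by positivity, 4 * M, by positivity, fun lam hlam t ht ↦ ?_⟩
  have hlam0 : 0 < lam := by linarith
  rw [abs_inner_sub_self_eq (hθ1 t ht) (hη1 lam hlam0 t ht)]
  refine one_sub_inner_le_of_hasDerivAt_pull hM hlam hθ1 hθd
    (fun s hs ↦ (hK s hs).trans (le_max_left K 1)) (hηc lam hlam0) (hη1 lam hlam0)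
    (hη0 lam hlam0) (fun s hs ↦ ?_) (fun s hs ↦ (hODE lam hlam0 s hs).1) t ht
  exact le_mul_of_one_le_right hlam0.le (one_le_cosh_div_sinh (hρpos lam hlam0 s hs))

/-- Setting as in the hyperbolic-development theorems, with `L = 1`:
`θ : [0,1] → S^{d-1}` is C¹ with derivative `θ'`, and for each `lam > 0` the pair
`(η lam, ρ lam)` solves the development ODE system.  Writing `f_lam = η lam − θ`:
there exist `C > 0` and `Λ > 0` such that for all `lam ≥ Λ`,
`sup_{t∈[0,1]} |⟨θ(t), f_lam(t)⟩| ≤ C / lam²`, i.e. the projection of `f_lam` onto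
`θ` is of order `O(1/lam²)`. -/
theorem step2_projection_bound
    {d : ℕ} (hd : 0 < d)
    (θ θ' : ℝ → EuclideanSpace ℝ (Fin d))
    (hθ1 : ∀ t ∈ Icc (0 : ℝ) 1, ‖θ t‖ = 1)
    (hθd : ∀ t ∈ Icc (0 : ℝ) 1, HasDerivAt θ (θ' t) t)
    (hθ'c : ContinuousOn θ' (Icc 0 1))
    (η : ℝ → ℝ → EuclideanSpace ℝ (Fin d)) (ρ : ℝ → ℝ → ℝ)
    (hηc : ∀ lam > (0 : ℝ), ContinuousOn (η lam) (Icc 0 1))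
    (hρc : ∀ lam > (0 : ℝ), ContinuousOn (ρ lam) (Icc 0 1))
    (hη1 : ∀ lam > (0 : ℝ), ∀ t ∈ Icc (0 : ℝ) 1, ‖η lam t‖ = 1)
    (hη0 : ∀ lam > (0 : ℝ), η lam 0 = θ 0)
    (hρ0 : ∀ lam > (0 : ℝ), ρ lam 0 = 0)
    (hρpos : ∀ lam > (0 : ℝ), ∀ t ∈ Ioc (0 : ℝ) 1, 0 < ρ lam t)
    (hODE : ∀ lam > (0 : ℝ), ∀ t ∈ Ioc (0 : ℝ) 1,
      HasDerivAt (η lam)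
        ((lam * (Real.cosh (ρ lam t) / Real.sinh (ρ lam t))) •
          (θ t - (inner ℝ (θ t) (η lam t) : ℝ) • η lam t)) t ∧
      HasDerivAt (ρ lam) (lam * (inner ℝ (θ t) (η lam t) : ℝ)) t) :
    ∃ C > (0 : ℝ), ∃ Λ > (0 : ℝ), ∀ lam ≥ Λ, ∀ t ∈ Icc (0 : ℝ) 1,
      |(inner ℝ (θ t) (η lam t - θ t) : ℝ)| ≤ C / lam ^ 2 :=
  step2_projection_bound_general θ θ' hθ1 hθd hθ'c η ρ hηc hη1 hη0 hρpos hODE
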